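/- arXiv:2312.07243 — 7 statements merged into one kernel-verified Lean document; each statement's English description precedes it below -/
import Mathlib

section
/- Let D be a positive integer, let I ⊆ ℝ be an open interval, let α, σ : I → ℝ be differentiable functions with α(t) > 0 and σ(t) > 0 for all t ∈ I, and set λ(t) := log(α(t)/σ(t)). Let ε̂ : ℝ → ℝ^D be continuous, let s ∈ I and x_s ∈ ℝ^D. Define x : I → ℝ^D by x(t) := (α(t)/α(s))·x_s − α(t)·∫_{λ(s)}^{λ(t)} e^{−u} ε̂(u) du. Then x(s) = x_s, x is differentiable on I, and for every t ∈ I, x'(t) = (α'(t)/α(t))·x(t) + (σ'(t) − σ(t)·α'(t)/α(t))·ε̂(λ(t)). In other words, the exponential-integral formula gives the exact solution of the noise-prediction diffusion ODE dx/dt = f(t)x + (g²(t)/(2σ(t)))ε̂, where f(t) = α'(t)/α(t) and g²(t) = dσ²(t)/dt − 2(α'(t)/α(t))σ²(t). -/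
/-!
Write `F(v) = ∫_{λ(s)}^{v} e^{-u} ε̂(u) du`, so `x(t) = (α(t)/α(s)) x_s - α(t) F(λ(t))`. By the chain and
product rules `x'` is `(α'/α) x` minus `α λ' e^{-λ} ε̂(λ)`, and since `λ' = α'/α - σ'/σ` and
`e^{-λ} = σ/α`, that last coefficient is `α'σ/α - σ'`.
-/

open Real

theorem hasDerivAt_log_div {f g : ℝ → ℝ} {f' g' t : ℝ} (hf : HasDerivAt f f' t)
    (hg : HasDerivAt g g' t) (hf0 : f t ≠ 0) (hg0 : g t ≠ 0) :
    HasDerivAt (fun u => log (f u / g u)) (f' / f t - g' / g t) t := by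
  refine ((hf.div hg hg0).log (div_ne_zero hf0 hg0)).congr_deriv ?_
  simp only [Pi.div_apply]
  field_simp

theorem Real.exp_neg_log_div {a b : ℝ} (ha : 0 < a) (hb : 0 < b) :
    exp (-log (a / b)) = b / a := by
  rw [← log_inv, exp_log (by positivity), inv_div]

section

variable {E : Type*} [NormedAddCommGroup E] [NormedSpace ℝ E] [CompleteSpace E]

theorem hasDerivAt_integral_exp_neg_smul {ε : ℝ → E} (hε : Continuous ε) (c v : ℝ) :
    HasDerivAt (fun w => ∫ u in c..w, exp (-u) • ε u) (exp (-v) • ε v) v :=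
  ((continuous_exp.comp continuous_neg).smul hε).integral_hasStrictDerivAt c v |>.hasDerivAt

theorem hasDerivAt_exponential_integral {α σ lam : ℝ → ℝ} {α' σ' t c k : ℝ} {ε : ℝ → E}
    {y : E} (hα : HasDerivAt α α' t) (hα0 : α t ≠ 0) (hσ0 : σ t ≠ 0)
    (hlam : HasDerivAt lam (α' / α t - σ' / σ t) t) (hexp : exp (-lam t) = σ t / α t)
    (hε : Continuous ε) :
    HasDerivAt (fun u => (α u / k) • y - α u • ∫ v in c..lam u, exp (-v) • ε v)
      ((α' / α t) • ((α t / k) • y - α t • ∫ v in c..lam t, exp (-v) • ε v) +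
        (σ' - σ t * α' / α t) • ε (lam t)) t := by
  have hF := (hasDerivAt_integral_exp_neg_smul hε c (lam t)).scomp t hlam
  refine (((hα.div_const k).smul_const y).sub (hα.smul hF)).congr_deriv ?_
  simp only [hexp, Function.comp_apply]
  match_scalars <;> field_simp
  ring

end

theorem stmt_0_general (D : ℕ) (a b : ℝ)
    (α σ α' σ' : ℝ → ℝ)
    (hα : ∀ t ∈ Set.Ioo a b, HasDerivAt α (α' t) t)
    (hσ : ∀ t ∈ Set.Ioo a b, HasDerivAt σ (σ' t) t)
    (hαpos : ∀ t ∈ Set.Ioo a b, 0 < α t)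
    (hσpos : ∀ t ∈ Set.Ioo a b, 0 < σ t)
    (lam : ℝ → ℝ) (hlam : ∀ t, lam t = Real.log (α t / σ t))
    (ε : ℝ → EuclideanSpace ℝ (Fin D)) (hε : Continuous ε)
    (s : ℝ) (hs : s ∈ Set.Ioo a b) (xs : EuclideanSpace ℝ (Fin D))
    (x : ℝ → EuclideanSpace ℝ (Fin D))
    (hx : ∀ t, x t = (α t / α s) • xs -
      (α t) • ∫ u in lam s..lam t, Real.exp (-u) • ε u) :
    x s = xs ∧ DifferentiableOn ℝ x (Set.Ioo a b) ∧
      ∀ t ∈ Set.Ioo a b,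
        HasDerivAt x ((α' t / α t) • x t +
          (σ' t - σ t * α' t / α t) • ε (lam t)) t := by
  have hderiv : ∀ t ∈ Set.Ioo a b, HasDerivAt x ((α' t / α t) • x t +
      (σ' t - σ t * α' t / α t) • ε (lam t)) t := by
    intro t ht
    have hlamt : HasDerivAt lam (α' t / α t - σ' t / σ t) t := by
      rw [funext hlam]
      exact hasDerivAt_log_div (hα t ht) (hσ t ht) (hαpos t ht).ne' (hσpos t ht).ne'
    rw [funext hx]
    exact hasDerivAt_exponential_integral (hα t ht) (hαpos t ht).ne' (hσpos t ht).ne' hlamt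
      (hlam t ▸ exp_neg_log_div (hαpos t ht) (hσpos t ht)) hε
  refine ⟨?_, fun t ht => (hderiv t ht).differentiableAt.differentiableWithinAt, hderiv⟩
  simp [hx, div_self (hαpos s hs).ne']

/-- The exponential-integral formula gives the exact solution of the
noise-prediction diffusion ODE. -/
theorem stmt_0 (D : ℕ) (hD : 0 < D) (a b : ℝ)
    (α σ α' σ' : ℝ → ℝ)
    (hα : ∀ t ∈ Set.Ioo a b, HasDerivAt α (α' t) t)
    (hσ : ∀ t ∈ Set.Ioo a b, HasDerivAt σ (σ' t) t)
    (hαpos : ∀ t ∈ Set.Ioo a b, 0 < α t)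
    (hσpos : ∀ t ∈ Set.Ioo a b, 0 < σ t)
    (lam : ℝ → ℝ) (hlam : ∀ t, lam t = Real.log (α t / σ t))
    (ε : ℝ → EuclideanSpace ℝ (Fin D)) (hε : Continuous ε)
    (s : ℝ) (hs : s ∈ Set.Ioo a b) (xs : EuclideanSpace ℝ (Fin D))
    (x : ℝ → EuclideanSpace ℝ (Fin D))
    (hx : ∀ t, x t = (α t / α s) • xs -
      (α t) • ∫ u in lam s..lam t, Real.exp (-u) • ε u) :
    x s = xs ∧ DifferentiableOn ℝ x (Set.Ioo a b) ∧
      ∀ t ∈ Set.Ioo a b,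
        HasDerivAt x ((α' t / α t) • x t +
          (σ' t - σ t * α' t / α t) • ε (lam t)) t :=
  stmt_0_general D a b α σ α' σ' hα hσ hαpos hσpos lam hlam ε hε s hs xs x hx
end

section
/- Let D be a positive integer, n ≥ 0 an integer, h > 0, λ_s ∈ ℝ, and let ε̂ : ℝ → ℝ^D be (n+1)-times continuously differentiable on [λ_s, λ_s + h] with ‖ε̂^{(n+1)}(u)‖ ≤ M for all u ∈ [λ_s, λ_s + h]. Then ‖ ∫_0^h e^{h−u} ε̂(λ_s + u) du − Σ_{k=0}^{n} ε̂^{(k)}(λ_s) · (e^h − Σ_{j=0}^{k} h^j/j!) ‖ ≤ M · e^h · h^{n+2}/(n+2)!. That is, the n-th order Taylor expansion of the noise-prediction exponential integral has truncation error of order h^{n+2}. -/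
/-!
Subtracting the Taylor polynomial `P` of `ε` at `l`, the left-hand side becomes
`∫₀ʰ e^{h-u} (ε(l+u) - P(l+u)) du`: the sum is exactly the integral of `e^{h-u} P(l+u)`, because
`-e^{h-t} ∑_{j ≤ k} t^j/j!` is an antiderivative of `e^{h-u} u^k/k!`. The Lagrange-type bound
`‖ε(l+u) - P(l+u)‖ ≤ M u^{n+1}/(n+1)!` together with `e^{h-u} ≤ e^h` then integrates to the claim.
-/

open Set Nat MeasureTheory

theorem hasDerivAt_sum_range_pow_div_factorial (k : ℕ) (u : ℝ) :
    HasDerivAt (fun t : ℝ => ∑ j ∈ Finset.range (k + 1), t ^ j / j !)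
      (∑ j ∈ Finset.range k, u ^ j / j !) u := by
  induction k with
  | zero => simpa using hasDerivAt_const u (1 : ℝ)
  | succ k ih =>
    have hlast : HasDerivAt (fun t : ℝ => t ^ (k + 1) / (k + 1)!) (u ^ k / k !) u := by
      refine ((hasDerivAt_pow (k + 1) u).div_const _).congr_deriv ?_
      rw [Nat.factorial_succ]
      push_cast
      field_simp
    rw [Finset.sum_range_succ (fun j => u ^ j / j !)]
    simp only [Finset.sum_range_succ _ (k + 1)]
    exact ih.fun_add hlast

theorem integral_exp_sub_mul_pow_div_factorial (h : ℝ) (k : ℕ) :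
    ∫ u in (0 : ℝ)..h, Real.exp (h - u) * (u ^ k / k !) =
      Real.exp h - ∑ j ∈ Finset.range (k + 1), h ^ j / j ! := by
  have hF (u : ℝ) : HasDerivAt
      (fun t => -(Real.exp (h - t) * ∑ j ∈ Finset.range (k + 1), t ^ j / j !))
      (Real.exp (h - u) * (u ^ k / k !)) u :=
    (((((hasDerivAt_id' u).const_sub h).exp).fun_mul
      (hasDerivAt_sum_range_pow_div_factorial k u)).fun_neg).congr_deriv (by
        rw [Finset.sum_range_succ]; ring)
  have hF0 : ∑ j ∈ Finset.range (k + 1), (0 : ℝ) ^ j / j ! = 1 := by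
    simp [Finset.sum_range_succ']
  rw [intervalIntegral.integral_eq_sub_of_hasDerivAt (fun u _ => hF u)
    ((by fun_prop : Continuous _).intervalIntegrable _ _), sub_self, sub_zero, Real.exp_zero, hF0]
  ring

section TaylorRemainder

variable {E : Type*} [NormedAddCommGroup E] [NormedSpace ℝ E]

/-- Sharper form of `taylor_mean_remainder_bound`, with `(n + 1)!` in place of `n!`. -/
theorem norm_sub_taylorWithinEval_le {f : ℝ → E} {a b C x : ℝ} {n : ℕ} (hab : a ≤ b)
    (hf : ContDiffOn ℝ (n + 1) f (Icc a b)) (hx : x ∈ Icc a b)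
    (hC : ∀ y ∈ Icc a b, ‖iteratedDerivWithin (n + 1) f (Icc a b) y‖ ≤ C) :
    ‖f x - taylorWithinEval f n (Icc a b) a x‖ ≤ C * (x - a) ^ (n + 1) / (n + 1)! := by
  rcases hab.eq_or_lt with rfl | hab
  · obtain rfl : x = a := by simpa using hx
    simp
  have hsub : Icc a x ⊆ Icc a b := Icc_subset_Icc_right hx.2
  have hderiv : ∀ t ∈ Icc a x, HasDerivWithinAt (fun y => taylorWithinEval f n (Icc a b) y x)
      (((n ! : ℝ)⁻¹ * (x - t) ^ n) • iteratedDerivWithin (n + 1) f (Icc a b) t) (Icc a b) t :=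
    fun t ht => hasDerivWithinAt_taylorWithinEval_at_Icc x hab (hsub ht) hf.of_succ
      (hf.differentiableOn_iteratedDerivWithin (mod_cast n.lt_succ_self) (uniqueDiffOn_Icc hab))
  -- Compare `y ↦ T_y(x) - T_a(x)`, which ends at `f x - T_a(x)`, with the same expression for
  -- the monomial `C (· - a)^(n+1)/(n+1)!`, whose derivative in `y` dominates in norm.
  have key := image_norm_le_of_norm_deriv_right_le_deriv_boundary
    (f := fun y => taylorWithinEval f n (Icc a b) y x - taylorWithinEval f n (Icc a b) a x)
    (B := fun y => C / (n + 1)! * ((x - a) ^ (n + 1) - (x - y) ^ (n + 1)))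
    (B' := fun t => C / (n + 1)! * ((n + 1) * (x - t) ^ n))
    (fun t ht => ((hderiv t ht).sub_const _).continuousWithinAt.mono hsub)
    (fun t ht => ((hderiv t (Ico_subset_Icc_self ht)).sub_const _).mono_of_mem_nhdsWithin
      (Icc_mem_nhdsGE_of_mem ⟨ht.1, ht.2.trans_le hx.2⟩))
    (by simp) ?hB ?bound (right_mem_Icc.2 hx.1)
  · simp only [taylorWithinEval_self, sub_self, ne_eq, add_eq_zero, one_ne_zero, and_false,
      not_false_eq_true, zero_pow, sub_zero] at key
    exact key.trans_eq (by ring)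
  case hB =>
    intro t
    exact (((hasDerivAt_const t ((x - a) ^ (n + 1))).fun_sub
      (monomial_has_deriv_aux t x n)).const_mul (C / (n + 1)!)).congr_deriv (by ring)
  case bound =>
    intro t ht
    have hxt : 0 ≤ x - t := sub_nonneg.2 ht.2.le
    calc ‖((n ! : ℝ)⁻¹ * (x - t) ^ n) • iteratedDerivWithin (n + 1) f (Icc a b) t‖
        ≤ (n ! : ℝ)⁻¹ * (x - t) ^ n * C := by
          rw [norm_smul, Real.norm_of_nonneg (by positivity)]
          gcongr
          exact hC t (hsub (Ico_subset_Icc_self ht))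
      _ = C / (n + 1)! * ((n + 1) * (x - t) ^ n) := by
          rw [Nat.factorial_succ]
          push_cast
          field_simp

@[fun_prop]
theorem continuous_taylorWithinEval (f : ℝ → E) (n : ℕ) (s : Set ℝ) (x₀ : ℝ) :
    Continuous (taylorWithinEval f n s x₀) := by
  simp_rw [funext (taylor_within_apply f n s x₀)]
  fun_prop

theorem exp_sub_smul_taylorWithinEval (f : ℝ → E) (n : ℕ) (s : Set ℝ) (a h u : ℝ) :
    Real.exp (h - u) • taylorWithinEval f n s a (a + u) =
      ∑ k ∈ Finset.range (n + 1),
        (Real.exp (h - u) * (u ^ k / k !)) • iteratedDerivWithin k f s a := by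
  rw [taylor_within_apply, Finset.smul_sum, add_sub_cancel_left]
  simp_rw [smul_smul, div_eq_inv_mul]

theorem integral_exp_sub_smul_taylorWithinEval [CompleteSpace E] (f : ℝ → E) (n : ℕ)
    (s : Set ℝ) (a h : ℝ) :
    ∫ u in (0 : ℝ)..h, Real.exp (h - u) • taylorWithinEval f n s a (a + u) =
      ∑ k ∈ Finset.range (n + 1),
        (Real.exp h - ∑ j ∈ Finset.range (k + 1), h ^ j / j !) • iteratedDerivWithin k f s a := by
  simp_rw [exp_sub_smul_taylorWithinEval]
  rw [intervalIntegral.integral_finsetSum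
    fun k _ => (by fun_prop : Continuous _).intervalIntegrable _ _]
  simp_rw [intervalIntegral.integral_smul_const, integral_exp_sub_mul_pow_div_factorial]

theorem norm_exp_sub_smul_sub_taylorWithinEval_le {f : ℝ → E} {n : ℕ} {a h M u : ℝ}
    (hf : ContDiffOn ℝ (n + 1) f (Icc a (a + h)))
    (hM : ∀ y ∈ Icc a (a + h), ‖iteratedDerivWithin (n + 1) f (Icc a (a + h)) y‖ ≤ M)
    (hu : u ∈ Icc 0 h) :
    ‖Real.exp (h - u) • f (a + u) -
        Real.exp (h - u) • taylorWithinEval f n (Icc a (a + h)) a (a + u)‖ ≤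
      Real.exp h * M / (n + 1)! * u ^ (n + 1) := by
  have hmem : a + u ∈ Icc a (a + h) := ⟨by linarith [hu.1], by linarith [hu.2]⟩
  have hrem := norm_sub_taylorWithinEval_le (by linarith [hu.1, hu.2]) hf hmem hM
  rw [add_sub_cancel_left] at hrem
  rw [← smul_sub, norm_smul, Real.norm_of_nonneg (Real.exp_pos _).le]
  calc Real.exp (h - u) * _ ≤ Real.exp h * (M * u ^ (n + 1) / (n + 1)!) :=
        mul_le_mul (Real.exp_le_exp.2 (by linarith [hu.1])) hrem (norm_nonneg _)
          (Real.exp_pos h).le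
    _ = Real.exp h * M / (n + 1)! * u ^ (n + 1) := by ring

end TaylorRemainder

theorem stmt_4_general (D n : ℕ) (h M : ℝ) (hh : 0 < h) (l : ℝ)
    (ε : ℝ → EuclideanSpace ℝ (Fin D))
    (hε : ContDiffOn ℝ (n + 1 : ℕ) ε (Set.Icc l (l + h)))
    (hM : ∀ u ∈ Set.Icc l (l + h),
      ‖iteratedDerivWithin (n + 1) ε (Set.Icc l (l + h)) u‖ ≤ M) :
    ‖(∫ u in (0:ℝ)..h, Real.exp (h - u) • ε (l + u)) -
        ∑ k ∈ Finset.range (n + 1),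
          (Real.exp h - ∑ j ∈ Finset.range (k + 1), h ^ j / (j.factorial : ℝ)) •
            iteratedDerivWithin k ε (Set.Icc l (l + h)) l‖ ≤
      M * Real.exp h * h ^ (n + 2) / ((n + 2).factorial : ℝ) := by
  have hmem : ∀ u ∈ Icc (0 : ℝ) h, l + u ∈ Icc l (l + h) := fun u hu =>
    ⟨by linarith [hu.1], by linarith [hu.2]⟩
  have hint_ε : IntervalIntegrable (fun u => Real.exp (h - u) • ε (l + u)) volume 0 h :=
    ((by fun_prop : Continuous fun u => Real.exp (h - u)).continuousOn.smul
      (hε.continuousOn.comp (by fun_prop) hmem)).intervalIntegrable_of_Icc hh.le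
  have hint_P : IntervalIntegrable
      (fun u => Real.exp (h - u) • taylorWithinEval ε n (Icc l (l + h)) l (l + u)) volume 0 h :=
    (by fun_prop : Continuous _).intervalIntegrable _ _
  rw [← integral_exp_sub_smul_taylorWithinEval, ← intervalIntegral.integral_sub hint_ε hint_P]
  calc _ ≤ ∫ u in (0 : ℝ)..h, Real.exp h * M / (n + 1)! * u ^ (n + 1) :=
        intervalIntegral.norm_integral_le_of_norm_le hh.le
          (ae_of_all _ fun u hu => norm_exp_sub_smul_sub_taylorWithinEval_le hε hM
            (Ioc_subset_Icc_self hu))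
          ((by fun_prop : Continuous _).intervalIntegrable _ _)
    _ = M * Real.exp h * h ^ (n + 2) / (n + 2)! := by
        rw [intervalIntegral.integral_const_mul, integral_pow, Nat.factorial_succ (n + 1)]
        push_cast
        field_simp
        ring

/-- The `n`-th order Taylor expansion of the noise-prediction exponential
integral has truncation error of order `h^(n+2)`. -/
theorem stmt_4 (D n : ℕ) (hD : 0 < D) (h M : ℝ) (hh : 0 < h) (l : ℝ)
    (ε : ℝ → EuclideanSpace ℝ (Fin D))
    (hε : ContDiffOn ℝ (n + 1 : ℕ) ε (Set.Icc l (l + h)))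
    (hM : ∀ u ∈ Set.Icc l (l + h),
      ‖iteratedDerivWithin (n + 1) ε (Set.Icc l (l + h)) u‖ ≤ M) :
    ‖(∫ u in (0:ℝ)..h, Real.exp (h - u) • ε (l + u)) -
        ∑ k ∈ Finset.range (n + 1),
          (Real.exp h - ∑ j ∈ Finset.range (k + 1), h ^ j / (j.factorial : ℝ)) •
            iteratedDerivWithin k ε (Set.Icc l (l + h)) l‖ ≤
      M * Real.exp h * h ^ (n + 2) / ((n + 2).factorial : ℝ) :=
  stmt_4_general D n h M hh l ε hε hM
end

section
/- Let D be a positive integer, let m ≥ k ≥ 1 be integers, let r_1, …, r_m be pairwise distinct nonzero reals, and let f : ℝ → ℝ^D be (m+1)-times continuously differentiable with ‖f^{(m+1)}‖ ≤ M everywhere. Suppose a ∈ ℝ^m satisfies the linear system Σ_{j=1}^m a_j · r_j^i / i! = δ_{ik} for every i ∈ {1, …, m} (where δ_{ik} = 1 if i = k and 0 otherwise). Then for every t ∈ ℝ and every h ≠ 0, ‖ h^{−k} Σ_{j=1}^m a_j (f(t + r_j h) − f(t)) − f^{(k)}(t) ‖ ≤ (Σ_{j=1}^m |a_j| |r_j|^{m+1})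 · M · |h|^{m−k+1}/(m+1)!. That is, the m-th Taylor-difference estimate of the k-th derivative converges with order m − k + 1 in h. -/
/-!
Expand each `f (t + r j * h)` to order `m` about `t`. By the integral form of the remainder,
the remainder is at most `M |r j h|^(m+1) / (m+1)!`. The constant Taylor terms cancel against
`f t`, and the moment conditions on `a` annihilate every term of order `1, …, m` except the
`k`-th, which contributes exactly `h^k f⁽ᵏ⁾(t)`. Dividing by `h^k` leaves the weighted remainders.
-/

open Finset Nat

theorem norm_integral_one_sub_pow_smul_le {E : Type*} [NormedAddCommGroup E] [NormedSpace ℝ E]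
    (n : ℕ) (g : ℝ → E) {M : ℝ} (hg : ∀ t, ‖g t‖ ≤ M) :
    ‖∫ t in (0 : ℝ)..1, (1 - t) ^ n • g t‖ ≤ M / (n + 1) := by
  have hint : ∫ t in (0 : ℝ)..1, (1 - t) ^ n * M = M / (n + 1) := by
    rw [intervalIntegral.integral_mul_const, intervalIntegral.integral_comp_sub_left
      (fun t => t ^ n), integral_pow]
    simp [div_eq_mul_inv, mul_comm]
  refine (intervalIntegral.norm_integral_le_of_norm_le zero_le_one ?_ ?_).trans_eq hint
  · refine Filter.Eventually.of_forall fun t ht => ?_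
    rw [norm_smul, Real.norm_eq_abs, abs_of_nonneg (pow_nonneg (by linarith [ht.2]) n)]
    exact mul_le_mul_of_nonneg_left (hg t) (pow_nonneg (by linarith [ht.2]) n)
  · exact (by fun_prop : Continuous fun t : ℝ => (1 - t) ^ n * M).intervalIntegrable 0 1

theorem norm_sub_taylor_sum_le {E : Type*} [NormedAddCommGroup E] [NormedSpace ℝ E]
    [CompleteSpace E] {n : ℕ} {f : ℝ → E} (hf : ContDiff ℝ (n + 1) f) {M : ℝ}
    (hM : ∀ u, ‖iteratedDeriv (n + 1) f u‖ ≤ M) (x y : ℝ) :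
    ‖f (x + y) - ∑ i ∈ range (n + 1), (y ^ i / i !) • iteratedDeriv i f x‖ ≤
      M * |y| ^ (n + 1) / (n + 1)! := by
  have htaylor := map_add_eq_sum_add_integral_iteratedFDeriv (x := x) (y := y)
    fun t _ => hf.contDiffAt
  simp only [iteratedFDeriv_apply_eq_iteratedDeriv_mul_prod, prod_const, Finset.card_fin,
    smul_eq_mul] at htaylor
  have hsum : ∑ i ∈ range (n + 1), (y ^ i / i !) • iteratedDeriv i f x =
      ∑ i ∈ range (n + 1), (i ! : ℝ)⁻¹ • y ^ i • iteratedDeriv i f x := by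
    simp only [smul_smul, div_eq_inv_mul]
  rw [hsum, htaylor, add_sub_cancel_left, norm_smul, Real.norm_eq_abs,
    abs_of_pos (by positivity)]
  have hint := norm_integral_one_sub_pow_smul_le n
    (fun t => y ^ (n + 1) • iteratedDeriv (n + 1) f (x + t * y))
    (M := |y| ^ (n + 1) * M) fun t => by
      rw [norm_smul, norm_pow, Real.norm_eq_abs]
      exact mul_le_mul_of_nonneg_left (hM _) (by positivity)
  calc (n ! : ℝ)⁻¹ * _ ≤ (n ! : ℝ)⁻¹ * (|y| ^ (n + 1) * M / (n + 1)) := by gcongr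
    _ = M * |y| ^ (n + 1) / (n + 1)! := by
      rw [factorial_succ]; push_cast; field_simp

theorem sum_smul_sum_pow_smul_eq_of_moments {E : Type*} [AddCommGroup E] [Module ℝ E]
    {I J : Finset ℕ} {k : ℕ} (hk : k ∈ I) {a r : ℕ → ℝ}
    (ha : ∀ i ∈ I, ∑ j ∈ J, a j * r j ^ i / i ! = if i = k then 1 else 0)
    (c : ℕ → E) (h : ℝ) :
    ∑ j ∈ J, a j • ∑ i ∈ I, ((r j * h) ^ i / i !) • c i = h ^ k • c k := by
  calc ∑ j ∈ J, a j • ∑ i ∈ I, ((r j * h) ^ i / i !) • c i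
      = ∑ i ∈ I, (∑ j ∈ J, a j * r j ^ i / i !) • h ^ i • c i := by
        simp only [smul_sum, smul_smul]
        rw [sum_comm]
        refine sum_congr rfl fun i _ => ?_
        rw [sum_mul, sum_smul]
        refine sum_congr rfl fun j _ => ?_
        rw [mul_pow]
        ring_nf
    _ = ∑ i ∈ I, if i = k then h ^ i • c i else 0 :=
        sum_congr rfl fun i hi => by rw [ha i hi, ite_smul, one_smul, zero_smul]
    _ = h ^ k • c k := by rw [sum_ite_eq' I k, if_pos hk]

theorem sum_range_succ_eq_add_sum_Icc {M : Type*} [AddCommMonoid M] (g : ℕ → M) (m : ℕ) :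
    ∑ i ∈ range (m + 1), g i = g 0 + ∑ i ∈ Icc 1 m, g i := by
  rw [sum_range_eq_add_Ico g (succ_pos m)]
  rfl

theorem norm_inv_pow_smul_sum_smul_le {E : Type*} [SeminormedAddCommGroup E] [NormedSpace ℝ E]
    {J : Finset ℕ} {a r : ℕ → ℝ} {R : ℕ → E} {C h : ℝ} {k n : ℕ} (hkn : k ≤ n) (hh : h ≠ 0)
    (hR : ∀ j ∈ J, ‖R j‖ ≤ C * |r j * h| ^ n) :
    ‖(h ^ k)⁻¹ • ∑ j ∈ J, a j • R j‖ ≤ (∑ j ∈ J, |a j| * |r j| ^ n) * C * |h| ^ (n - k) := by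
  calc ‖(h ^ k)⁻¹ • ∑ j ∈ J, a j • R j‖
      ≤ (|h| ^ k)⁻¹ * ∑ j ∈ J, |a j| * (C * |r j * h| ^ n) := by
        rw [norm_smul, norm_inv, norm_pow, Real.norm_eq_abs]
        gcongr
        refine (norm_sum_le _ _).trans (sum_le_sum fun j hj => ?_)
        rw [norm_smul, Real.norm_eq_abs]
        exact mul_le_mul_of_nonneg_left (hR j hj) (abs_nonneg _)
    _ = (∑ j ∈ J, |a j| * |r j| ^ n) * C * |h| ^ (n - k) := by
        rw [pow_sub₀ _ (abs_ne_zero.2 hh) hkn, mul_sum, sum_mul, sum_mul]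
        refine sum_congr rfl fun j _ => ?_
        rw [abs_mul, mul_pow]
        ring

theorem stmt_6_general (D m k : ℕ) (hk : 1 ≤ k) (hkm : k ≤ m)
    (r a : ℕ → ℝ) (M : ℝ)
    (f : ℝ → EuclideanSpace ℝ (Fin D))
    (hf : ContDiff ℝ (m + 1 : ℕ) f)
    (hM : ∀ u : ℝ, ‖iteratedDeriv (m + 1) f u‖ ≤ M)
    (ha : ∀ i ∈ Finset.Icc 1 m,
      ∑ j ∈ Finset.Icc 1 m, a j * r j ^ i / (i.factorial : ℝ) =
        if i = k then 1 else 0) :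
    ∀ (t h : ℝ), h ≠ 0 →
      ‖(h ^ k)⁻¹ • ∑ j ∈ Finset.Icc 1 m, a j • (f (t + r j * h) - f t) -
          iteratedDeriv k f t‖ ≤
        (∑ j ∈ Finset.Icc 1 m, |a j| * |r j| ^ (m + 1)) * M * |h| ^ (m - k + 1) /
          ((m + 1).factorial : ℝ) := by
  intro t h hh
  set R : ℕ → EuclideanSpace ℝ (Fin D) := fun j => f (t + r j * h) -
    ∑ i ∈ range (m + 1), ((r j * h) ^ i / i !) • iteratedDeriv i f t
  have hR (j : ℕ) : ‖R j‖ ≤ M / (m + 1)! * |r j * h| ^ (m + 1) :=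
    (norm_sub_taylor_sum_le (by exact_mod_cast hf) hM t (r j * h)).trans_eq (by ring)
  have hdiff (j : ℕ) : f (t + r j * h) - f t =
      ∑ i ∈ Icc 1 m, ((r j * h) ^ i / i !) • iteratedDeriv i f t + R j := by
    simp only [R, sum_range_succ_eq_add_sum_Icc _ m, pow_zero, factorial_zero, cast_one,
      div_one, one_smul, iteratedDeriv_zero]
    abel
  have hsum : ∑ j ∈ Icc 1 m, a j • (f (t + r j * h) - f t) =
      h ^ k • iteratedDeriv k f t + ∑ j ∈ Icc 1 m, a j • R j := by
    simp only [hdiff, smul_add, sum_add_distrib,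
      sum_smul_sum_pow_smul_eq_of_moments (mem_Icc.2 ⟨hk, hkm⟩) ha]
  rw [hsum, smul_add, inv_smul_smul₀ (pow_ne_zero k hh), add_sub_cancel_left]
  refine (norm_inv_pow_smul_sum_smul_le (by omega) hh fun j _ => hR j).trans_eq ?_
  rw [show m + 1 - k = m - k + 1 by omega]
  ring

/-- The `m`-th Taylor-difference estimate of the `k`-th derivative converges
with order `m - k + 1` in `h`. -/
theorem stmt_6 (D m k : ℕ) (hD : 0 < D) (hk : 1 ≤ k) (hkm : k ≤ m)
    (r a : ℕ → ℝ) (M : ℝ)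
    (hr0 : ∀ j ∈ Finset.Icc 1 m, r j ≠ 0)
    (hrdist : ∀ j ∈ Finset.Icc 1 m, ∀ j' ∈ Finset.Icc 1 m, j ≠ j' → r j ≠ r j')
    (f : ℝ → EuclideanSpace ℝ (Fin D))
    (hf : ContDiff ℝ (m + 1 : ℕ) f)
    (hM : ∀ u : ℝ, ‖iteratedDeriv (m + 1) f u‖ ≤ M)
    (ha : ∀ i ∈ Finset.Icc 1 m,
      ∑ j ∈ Finset.Icc 1 m, a j * r j ^ i / (i.factorial : ℝ) =
        if i = k then 1 else 0) :
    ∀ (t h : ℝ), h ≠ 0 →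
      ‖(h ^ k)⁻¹ • ∑ j ∈ Finset.Icc 1 m, a j • (f (t + r j * h) - f t) -
          iteratedDeriv k f t‖ ≤
        (∑ j ∈ Finset.Icc 1 m, |a j| * |r j| ^ (m + 1)) * M * |h| ^ (m - k + 1) /
          ((m + 1).factorial : ℝ) :=
  stmt_6_general D m k hk hkm r a M f hf hM ha
end

section
/- Let D be a positive integer, n ≥ 1 an integer, λ_s ∈ ℝ, x_s ∈ ℝ^D, and let ε̂ : ℝ → ℝ^D be n-times continuously differentiable on [λ_s, λ_s + 1] with ‖ε̂^{(n)}(u)‖ ≤ M there. Let B, c, c_0, …, c_{n−1} > 0 and l, d_0, …, d_{n−1} > 0. For each h ∈ (0, 1], let α_s, α_t(h), σ_t(h) > 0 satisfy σ_t(h) = α_t(h)·e^{−(λ_s + h)} and α_t(h)/α_s ≤ B; define the exact updated value x_t(h) := (α_t(h)/α_s)·x_s − σ_t(h)·∫_0^h e^{h−u} ε̂(λ_s + u) du and the numerical update x̃_t(h) := (α_t(h)/α_s)·x̃_s(h) − σ_t(h)·Σ_{k=0}^{n−1} (e^h − Σ_{j=0}^{k} h^j/j!) · ẽ_k(h), where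 the approximations satisfy ‖x̃_s(h) − x_s‖ ≤ c h^l and ‖ẽ_k(h) − ε̂^{(k)}(λ_s)‖ ≤ c_k h^{d_k} for k = 0, …, n−1. Then there exists a constant C such that for all h ∈ (0, 1], ‖x̃_t(h) − x_t(h)‖ ≤ C h^p, where p = min(n + 1, l, min_{0 ≤ k ≤ n−1}(d_k + k + 1)). That is, the one-step update converges to h with order min(n+1, l, d_0+1, d_1+2, …, d_{n−1}+n). -/
/-!
Subtracting the two updates, the error splits into three pieces: the error of the starting
value, scaled by `α_t / α_s ≤ B`; the errors of the derivative estimates, weighted by the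
coefficients `e^h - ∑_{j ≤ k} h^j / j! = O(h^{k+1})`; and `σ_t` times the error made by replacing
`ε̂(λ_s + u)` in the exact integral by its Taylor polynomial of degree `n - 1` at `λ_s`.
Integrating that polynomial against `e^{h-u}` produces exactly the coefficients of the update,
so the last piece is `O(h^{n+1})` by the Lagrange bound on the Taylor remainder. Finally
`σ_t ≤ B α_s e^{-λ_s}` uniformly in `h`, and `h^q ≤ h^p` for `q ≥ p` and `h ≤ 1`.
-/

open Real Finset Nat

noncomputable def expTail (k : ℕ) (h : ℝ) : ℝ :=
  exp h - ∑ j ∈ range (k + 1), h ^ j / j !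

theorem hasDerivAt_sum_range_succ_pow_div_factorial (k : ℕ) (u : ℝ) :
    HasDerivAt (fun u : ℝ => ∑ j ∈ range (k + 1), u ^ j / j !)
      (∑ j ∈ range k, u ^ j / j !) u := by
  refine (HasDerivAt.fun_sum fun j (_ : j ∈ range (k + 1)) =>
    (hasDerivAt_pow j u).div_const (j ! : ℝ)).congr_deriv ?_
  rw [sum_range_succ']
  simp only [Nat.cast_zero, zero_mul, zero_div, add_zero, Nat.cast_succ, add_tsub_cancel_right,
    Nat.factorial_succ, Nat.cast_mul]
  refine sum_congr rfl fun j _ => ?_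
  field_simp

theorem integral_exp_sub_mul_pow_div_factorial_s9 (k : ℕ) (h : ℝ) :
    ∫ u in (0 : ℝ)..h, exp (h - u) * ((k ! : ℝ)⁻¹ * u ^ k) = expTail k h := by
  have hderiv (u : ℝ) : HasDerivAt (fun u => -(exp (h - u) * ∑ j ∈ range (k + 1), u ^ j / j !))
      (exp (h - u) * ((k ! : ℝ)⁻¹ * u ^ k)) u := by
    have hexp : HasDerivAt (fun u => exp (h - u)) (-exp (h - u)) u := by
      simpa using ((hasDerivAt_id u).const_sub h).exp
    refine (hexp.fun_mul (hasDerivAt_sum_range_succ_pow_div_factorial k u)).fun_neg.congr_deriv ?_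
    rw [sum_range_succ]
    ring
  rw [intervalIntegral.integral_eq_sub_of_hasDerivAt (fun u _ => hderiv u)
    (by apply Continuous.intervalIntegrable; fun_prop), expTail]
  have hsum_zero : ∑ j ∈ range (k + 1), (0 : ℝ) ^ j / j ! = 1 := by simp [sum_range_succ']
  simp [hsum_zero]
  ring

theorem abs_expTail_le (k : ℕ) {h : ℝ} (h0 : 0 ≤ h) (h1 : h ≤ 1) :
    |expTail k h| ≤ 2 * h ^ (k + 1) := by
  have hbound := Real.exp_bound (x := h) (by rwa [abs_of_nonneg h0]) k.succ_pos
  rw [abs_of_nonneg h0] at hbound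
  refine hbound.trans ?_
  rw [mul_comm]
  gcongr
  rw [div_le_iff₀ (by positivity)]
  have : (1 : ℝ) ≤ (k + 1)! := mod_cast (k + 1).factorial_pos
  push_cast
  nlinarith

section Taylor

variable {E : Type*} [NormedAddCommGroup E] [NormedSpace ℝ E] [CompleteSpace E]

theorem integral_exp_smul_taylorWithinEval (f : ℝ → E) (m : ℕ) (s : Set ℝ) (a h : ℝ) :
    ∫ u in (0 : ℝ)..h, exp (h - u) • taylorWithinEval f m s a (a + u) =
      ∑ k ∈ range (m + 1), expTail k h • iteratedDerivWithin k f s a := by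
  simp only [taylor_within_apply, add_sub_cancel_left, smul_sum, smul_smul]
  rw [intervalIntegral.integral_finsetSum fun k _ => by
    apply Continuous.intervalIntegrable; fun_prop]
  simp only [intervalIntegral.integral_smul_const, integral_exp_sub_mul_pow_div_factorial_s9]

theorem norm_integral_exp_smul_sub_sum_expTail_le {f : ℝ → E} {m : ℕ} {a b h M : ℝ}
    (hf : ContDiffOn ℝ (m + 1) f (Set.Icc a b))
    (hM : ∀ y ∈ Set.Icc a b, ‖iteratedDerivWithin (m + 1) f (Set.Icc a b) y‖ ≤ M)
    (h0 : 0 ≤ h) (hab : a + h ≤ b) :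
    ‖(∫ u in (0 : ℝ)..h, exp (h - u) • f (a + u)) -
        ∑ k ∈ range (m + 1), expTail k h • iteratedDerivWithin k f (Set.Icc a b) a‖ ≤
      exp h * (M * h ^ (m + 1) / m !) * h := by
  have hmem : ∀ u ∈ Set.Icc 0 h, a + u ∈ Set.Icc a b := fun u hu =>
    ⟨by linarith [hu.1], by linarith [hu.2]⟩
  have hf_int :
      IntervalIntegrable (fun u => exp (h - u) • f (a + u)) MeasureTheory.volume 0 h := by
    refine ContinuousOn.intervalIntegrable ?_
    rw [Set.uIcc_of_le h0]
    exact (continuous_exp.comp (continuous_sub_left h)).continuousOn.smul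
      (hf.continuousOn.comp (by fun_prop) hmem)
  have hT_int : IntervalIntegrable
      (fun u => exp (h - u) • taylorWithinEval f m (Set.Icc a b) a (a + u))
      MeasureTheory.volume 0 h := by
    simp only [taylor_within_apply]
    apply Continuous.intervalIntegrable
    fun_prop
  rw [← integral_exp_smul_taylorWithinEval, ← intervalIntegral.integral_sub hf_int hT_int]
  refine (intervalIntegral.norm_integral_le_of_norm_le_const fun u hu => ?_).trans_eq
    (by rw [sub_zero, abs_of_nonneg h0])
  rw [Set.uIoc_of_le h0] at hu
  rw [← smul_sub, norm_smul, Real.norm_of_nonneg (exp_pos _).le]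
  have hM0 : 0 ≤ M := (norm_nonneg _).trans (hM a ⟨le_rfl, by linarith⟩)
  have htaylor :=
    taylor_mean_remainder_bound (f := f) (by linarith) hf (hmem u ⟨hu.1.le, hu.2⟩) hM
  rw [add_sub_cancel_left] at htaylor
  gcongr
  · linarith [hu.1]
  · exact htaylor.trans (by gcongr; exacts [hu.1.le, hu.2])

end Taylor

theorem norm_oneStep_sub_le {E : Type*} [NormedAddCommGroup E] [NormedSpace ℝ E] {α σ : ℝ}
    (hα : 0 ≤ α) (hσ : 0 ≤ σ) (x x' I : E) (c : ℕ → ℝ) (e e' : ℕ → E) (n : ℕ) :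
    ‖(α • x' - σ • ∑ k ∈ range n, c k • e' k) - (α • x - σ • I)‖ ≤
      α * ‖x' - x‖ +
        σ * (∑ k ∈ range n, |c k| * ‖e' k - e k‖ + ‖I - ∑ k ∈ range n, c k • e k‖) := by
  have hdecomp : (α • x' - σ • ∑ k ∈ range n, c k • e' k) - (α • x - σ • I) =
      α • (x' - x) +
        σ • (∑ k ∈ range n, c k • (e k - e' k) + (I - ∑ k ∈ range n, c k • e k)) := by
    simp only [smul_sub, sum_sub_distrib]
    module
  rw [hdecomp]
  refine (norm_add_le _ _).trans ?_
  rw [norm_smul, norm_smul, Real.norm_of_nonneg hα, Real.norm_of_nonneg hσ]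
  gcongr
  refine (norm_add_le _ _).trans (add_le_add_left ((norm_sum_le _ _).trans_eq ?_) _)
  simp only [norm_smul, Real.norm_eq_abs, norm_sub_rev]

theorem mul_rpow_le_abs_mul_rpow {c h a p : ℝ} (h0 : 0 < h) (h1 : h ≤ 1) (hpa : p ≤ a) :
    c * h ^ a ≤ |c| * h ^ p :=
  mul_le_mul (le_abs_self c) (rpow_le_rpow_of_exponent_ge h0 h1 hpa) (by positivity) (abs_nonneg c)

theorem abs_expTail_mul_le {E : Type*} [SeminormedAddCommGroup E] {v : E} {k : ℕ} {c d h p : ℝ}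
    (h0 : 0 < h) (h1 : h ≤ 1) (hv : ‖v‖ ≤ c * h ^ d) (hp : p ≤ d + k + 1) :
    |expTail k h| * ‖v‖ ≤ 2 * |c| * h ^ p :=
  calc |expTail k h| * ‖v‖ ≤ 2 * h ^ (k + 1) * (c * h ^ d) :=
        mul_le_mul (abs_expTail_le k h0.le h1) hv (norm_nonneg v) (by positivity)
    _ = 2 * (c * h ^ (d + k + 1)) := by
        rw [add_assoc, rpow_add h0, ← Nat.cast_add_one, rpow_natCast]; ring
    _ ≤ 2 * (|c| * h ^ p) := by grw [mul_rpow_le_abs_mul_rpow h0 h1 hp]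
    _ = 2 * |c| * h ^ p := by ring

theorem norm_oneStep_sub_le_rpow {E : Type*} [NormedAddCommGroup E] [NormedSpace ℝ E]
    [CompleteSpace E] {f : ℝ → E} {m : ℕ} {a b M : ℝ}
    (hf : ContDiffOn ℝ (m + 1) f (Set.Icc a b))
    (hM : ∀ y ∈ Set.Icc a b, ‖iteratedDerivWithin (m + 1) f (Set.Icc a b) y‖ ≤ M)
    (hab : a + 1 ≤ b) {h α σ B S c l p : ℝ} {ck d : ℕ → ℝ} {x x' : E} {e' : ℕ → E}
    (hh : h ∈ Set.Ioc 0 1) (hα : α ∈ Set.Icc 0 B) (hσ : σ ∈ Set.Icc 0 S)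
    (hx : ‖x' - x‖ ≤ c * h ^ l)
    (he : ∀ k < m + 1, ‖e' k - iteratedDerivWithin k f (Set.Icc a b) a‖ ≤ ck k * h ^ d k)
    (hp_taylor : p ≤ m + 1 + 1) (hp_start : p ≤ l) (hp_deriv : ∀ k < m + 1, p ≤ d k + k + 1) :
    ‖(α • x' - σ • ∑ k ∈ range (m + 1), expTail k h • e' k) -
        (α • x - σ • ∫ u in (0 : ℝ)..h, exp (h - u) • f (a + u))‖ ≤
      (B * |c| + S * (∑ k ∈ range (m + 1), 2 * |ck k| + exp 1 * M / m !)) * h ^ p := by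
  obtain ⟨h0, h1⟩ := hh
  have hM0 : 0 ≤ M := (norm_nonneg _).trans (hM a ⟨le_rfl, by linarith⟩)
  have hremainder : exp h * (M * h ^ (m + 1) / m !) * h ≤ exp 1 * M / m ! * h ^ p :=
    calc exp h * (M * h ^ (m + 1) / m !) * h = exp h * M / m ! * h ^ ((m : ℝ) + 1 + 1) := by
          rw [rpow_add_one h0.ne', ← Nat.cast_add_one, rpow_natCast]; ring
      _ ≤ exp 1 * M / m ! * h ^ p :=
          mul_le_mul (by gcongr) (rpow_le_rpow_of_exponent_ge h0 h1 hp_taylor) (by positivity)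
            (by positivity)
  calc _ ≤ α * ‖x' - x‖ + σ * (∑ k ∈ range (m + 1),
          |expTail k h| * ‖e' k - iteratedDerivWithin k f (Set.Icc a b) a‖ +
        ‖(∫ u in (0 : ℝ)..h, exp (h - u) • f (a + u)) -
          ∑ k ∈ range (m + 1), expTail k h • iteratedDerivWithin k f (Set.Icc a b) a‖) :=
        norm_oneStep_sub_le hα.1 hσ.1 _ _ _ _ _ _ _
    _ ≤ B * (|c| * h ^ p) +
          S * (∑ k ∈ range (m + 1), 2 * |ck k| * h ^ p + exp 1 * M / m ! * h ^ p) := by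
        have hB : 0 ≤ B := hα.1.trans hα.2
        have hS : 0 ≤ S := hσ.1.trans hσ.2
        gcongr ?_ * ?_ + ?_ * (∑ k ∈ _, ?_ + ?_) with k hk
        · exact hα.2
        · exact hx.trans (mul_rpow_le_abs_mul_rpow h0 h1 hp_start)
        · exact hσ.2
        · exact abs_expTail_mul_le h0 h1 (he k (mem_range.1 hk)) (hp_deriv k (mem_range.1 hk))
        · exact (norm_integral_exp_smul_sub_sum_expTail_le hf hM h0.le (by linarith)).trans
            hremainder
    _ = _ := by rw [← sum_mul]; ring

/-- Convergence order of the one-step update of the unified sampling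
framework (noise prediction): the numerical update converges to the exact
update with order `min(n+1, l, min_k (d_k + k + 1))` in the step size `h`. -/
theorem stmt_9 (D n : ℕ) (hn : 1 ≤ n)
    (ls : ℝ) (xs : EuclideanSpace ℝ (Fin D))
    (ε : ℝ → EuclideanSpace ℝ (Fin D))
    (hε : ContDiffOn ℝ (n : ℕ) ε (Set.Icc ls (ls + 1)))
    (M : ℝ)
    (hM : ∀ u ∈ Set.Icc ls (ls + 1),
      ‖iteratedDerivWithin n ε (Set.Icc ls (ls + 1)) u‖ ≤ M)
    (B c : ℝ) (ck : ℕ → ℝ)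
    (l : ℝ) (d : ℕ → ℝ)
    (αs : ℝ) (hαs : 0 < αs)
    (αt σt : ℝ → ℝ)
    (hαt : ∀ h ∈ Set.Ioc (0:ℝ) 1, 0 < αt h)
    (hrel : ∀ h ∈ Set.Ioc (0:ℝ) 1, σt h = αt h * Real.exp (-(ls + h)))
    (hratio : ∀ h ∈ Set.Ioc (0:ℝ) 1, αt h / αs ≤ B)
    (xt : ℝ → EuclideanSpace ℝ (Fin D))
    (hxt : ∀ h, xt h = (αt h / αs) • xs -
      (σt h) • ∫ u in (0:ℝ)..h, Real.exp (h - u) • ε (ls + u))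
    (xts : ℝ → EuclideanSpace ℝ (Fin D))
    (ek : ℕ → ℝ → EuclideanSpace ℝ (Fin D))
    (xtt : ℝ → EuclideanSpace ℝ (Fin D))
    (hxtt : ∀ h, xtt h = (αt h / αs) • xts h -
      (σt h) • ∑ k ∈ Finset.range n,
        (Real.exp h - ∑ j ∈ Finset.range (k + 1), h ^ j / (j.factorial : ℝ)) • ek k h)
    (hxts : ∀ h ∈ Set.Ioc (0:ℝ) 1, ‖xts h - xs‖ ≤ c * h ^ l)
    (hek : ∀ h ∈ Set.Ioc (0:ℝ) 1, ∀ k < n,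
      ‖ek k h - iteratedDerivWithin k ε (Set.Icc ls (ls + 1)) ls‖ ≤ ck k * h ^ (d k)) :
    ∃ C : ℝ, ∀ h ∈ Set.Ioc (0:ℝ) 1,
      ‖xtt h - xt h‖ ≤ C * h ^
        (min ((n : ℝ) + 1) (min l
          ((Finset.range n).inf' (Finset.nonempty_range_iff.mpr (by omega))
            fun k => d k + (k : ℝ) + 1))) := by
  obtain ⟨m, rfl⟩ : ∃ m, n = m + 1 := ⟨n - 1, by omega⟩
  refine ⟨B * |c| + B * αs * exp (-ls) * (∑ k ∈ range (m + 1), 2 * |ck k| + exp 1 * M / m !),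
    fun h hh => ?_⟩
  have hα : αt h / αs ∈ Set.Icc 0 B := ⟨(div_pos (hαt h hh) hαs).le, hratio h hh⟩
  have hσ : σt h ∈ Set.Icc 0 (B * αs * exp (-ls)) := by
    rw [hrel h hh, ← div_mul_cancel₀ (αt h) hαs.ne', mul_assoc, mul_assoc]
    refine ⟨mul_nonneg hα.1 (by positivity), mul_le_mul hα.2 ?_ (by positivity) (hα.1.trans hα.2)⟩
    gcongr
    linarith [hh.1]
  rw [hxt, hxtt]
  refine norm_oneStep_sub_le_rpow (mod_cast hε) hM le_rfl hh hα hσ (hxts h hh) (hek h hh)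
    (by push_cast; exact min_le_left _ _) ((min_le_right _ _).trans (min_le_left _ _))
    fun k hk => (min_le_right _ _).trans <| (min_le_right _ _).trans <|
      inf'_le _ (mem_range.2 hk)
end

section
/- Let D be a positive integer and h ≠ 0 a real number. Then e^h − h − 1 > 0, and with φ^ε_2(h) := (e^h − h − 1)/h² and R_1(h) := (h/2)(e^h − 1)/(e^h − h − 1) − 1, for all α_t, α_s, σ_t > 0 and all x_s, ε_s, ε_m ∈ ℝ^D one has (α_t/α_s)·x_s − σ_t·(e^h − 1)·ε_m = (α_t/α_s)·x_s − σ_t·(e^h − 1)·ε_s − σ_t·(1 + R_1(h))·h²·φ^ε_2(h)·(ε_m − ε_s)/(h/2). That is, the second stage of DPM-Solver-2, which evaluates the noise prediction at the log-SNR midpoint, is exactly the second-order Taylor expansion update of the unified framework in which the first derivative is estimated by the midpoint finite difference (ε_m − ε_s)/(h/2) and rescaled by the coefficient 1 + R_1(h). -/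
/-- The second stage of DPM-Solver-2 (noise prediction at the log-SNR
midpoint) is exactly the second-order Taylor update with the midpoint finite
difference `(ε_m - ε_s)/(h/2)` rescaled by `1 + R_1(h)`, where
`R_1(h) = (h/2)(e^h-1)/(e^h-h-1) - 1` and `φ^ε_2(h) = (e^h-h-1)/h²`. -/
theorem stmt_12 (D : ℕ) (hD : 0 < D) (h : ℝ) (hh : h ≠ 0) :
    0 < Real.exp h - h - 1 ∧
    ∀ (αt αs σt : ℝ), 0 < αt → 0 < αs → 0 < σt →
      ∀ xs εs εm : EuclideanSpace ℝ (Fin D),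
        (αt / αs) • xs - (σt * (Real.exp h - 1)) • εm =
          (αt / αs) • xs - (σt * (Real.exp h - 1)) • εs -
            (σt * (1 + ((h / 2) * (Real.exp h - 1) / (Real.exp h - h - 1) - 1)) *
              h ^ 2 * ((Real.exp h - h - 1) / h ^ 2) / (h / 2)) • (εm - εs) := by
  have hpos : 0 < Real.exp h - h - 1 := by
    have := Real.add_one_lt_exp hh
    linarith
  refine ⟨hpos, fun αt αs σt _ _ _ xs εs εm => ?_⟩
  have hne : Real.exp h - h - 1 ≠ 0 := ne_of_gt hpos
  have hcoef : σt * (1 + ((h / 2) * (Real.exp h - 1) / (Real.exp h - h - 1) - 1)) *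
      h ^ 2 * ((Real.exp h - h - 1) / h ^ 2) / (h / 2) = σt * (Real.exp h - 1) := by
    field_simp
    ring
  rw [hcoef, smul_sub]
  abel
end

section
/- Let p ≥ 2 be an integer, h ≠ 0, B ≠ 0 reals, and r_1, …, r_{p−1} pairwise distinct nonzero reals. For i ≥ 1 define φ_{i+1}(h) := (e^h − Σ_{j=0}^{i} h^j/j!)/h^{i+1}. Suppose q ∈ ℝ^{p−1} satisfies Σ_{m=1}^{p−1} (r_m^i / i!)·q_m = h·φ_{i+1}(h) for every i = 1, …, p−1, and suppose a ∈ ℝ^{p−1} satisfies Σ_{m=1}^{p−1} (r_m h)^{i−1}·(B·a_m) = i!·h^i·φ_{i+1}(h) for every i = 1, …, p−1. Then B·a_m = r_m·q_m for every m = 1, …, p−1; consequently, for any vectors D_1, …, D_{p−1} in ℝ^D, B·Σ_{m=1}^{p−1} a_m D_m / r_m = Σ_{m=1}^{p−1} q_m D_m. That is, the UniPC predictor (UniP) update −σ_t(e^h−1)ε_s − σ_t B(h)Σ_m a_m D_m/r_m coincides with the p-th order Taylor expansion update of the unified framework in which every derivative is estimated by the full-order Taylor-difference method. -/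
/-- The UniPC predictor (UniP) update coincides with the `p`-th order Taylor
expansion update of the unified framework with full-order Taylor-difference
derivative estimation: `B a_m = r_m q_m` and hence
`B Σ_m a_m D_m / r_m = Σ_m q_m D_m`. -/
theorem stmt_14 (D p : ℕ) (hD : 0 < D) (hp : 2 ≤ p)
    (h B : ℝ) (hh : h ≠ 0) (hB : B ≠ 0)
    (r : ℕ → ℝ)
    (hr0 : ∀ m ∈ Finset.Icc 1 (p - 1), r m ≠ 0)
    (hrdist : ∀ m ∈ Finset.Icc 1 (p - 1), ∀ m' ∈ Finset.Icc 1 (p - 1),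
      m ≠ m' → r m ≠ r m')
    (φ : ℕ → ℝ)
    (hφ : ∀ i : ℕ, 1 ≤ i → φ (i + 1) =
      (Real.exp h - ∑ j ∈ Finset.range (i + 1), h ^ j / (j.factorial : ℝ)) / h ^ (i + 1))
    (q a : ℕ → ℝ)
    (hq : ∀ i ∈ Finset.Icc 1 (p - 1),
      ∑ m ∈ Finset.Icc 1 (p - 1), r m ^ i / (i.factorial : ℝ) * q m = h * φ (i + 1))
    (ha : ∀ i ∈ Finset.Icc 1 (p - 1),
      ∑ m ∈ Finset.Icc 1 (p - 1), (r m * h) ^ (i - 1) * (B * a m) =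
        (i.factorial : ℝ) * h ^ i * φ (i + 1)) :
    (∀ m ∈ Finset.Icc 1 (p - 1), B * a m = r m * q m) ∧
    ∀ Dv : ℕ → EuclideanSpace ℝ (Fin D),
      B • ∑ m ∈ Finset.Icc 1 (p - 1), (a m / r m) • Dv m =
        ∑ m ∈ Finset.Icc 1 (p - 1), q m • Dv m := by
  set n := p - 1 with hn
  have hn1 : 1 ≤ n := by omega
  -- convert Icc sums to range sums
  have hIcc : ∀ f : ℕ → ℝ, ∑ m ∈ Finset.Icc 1 n, f m = ∑ k ∈ Finset.range n, f (1 + k) := by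
    intro f
    rw [← Finset.Ico_add_one_right_eq_Icc, Finset.sum_Ico_eq_sum_range]
    simp
  -- the difference vector
  set v : Fin n → ℝ := fun k => r (1 + (k : ℕ)) with hv
  set x : Fin n → ℝ := fun k => B * a (1 + (k : ℕ)) - r (1 + (k : ℕ)) * q (1 + (k : ℕ)) with hx
  have hmem : ∀ k : Fin n, 1 + (k : ℕ) ∈ Finset.Icc 1 n := by
    intro k
    simp only [Finset.mem_Icc]
    omega
  have hsum : ∀ j : Fin n, ∑ k, v k ^ (j : ℕ) * x k = 0 := by
    intro j
    have hi : (j : ℕ) + 1 ∈ Finset.Icc 1 n := by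
      simp only [Finset.mem_Icc]
      omega
    have h1 := ha _ hi
    have h2 := hq _ hi
    have hfac : ((((j : ℕ) + 1).factorial : ℝ)) ≠ 0 := by positivity
    have h1' : ∑ m ∈ Finset.Icc 1 n, r m ^ (j : ℕ) * (B * a m)
        = ((((j : ℕ) + 1).factorial : ℝ)) * h * φ ((j : ℕ) + 1 + 1) := by
      have hrw : ∑ m ∈ Finset.Icc 1 n, (r m * h) ^ ((j : ℕ) + 1 - 1) * (B * a m)
          = h ^ (j : ℕ) * ∑ m ∈ Finset.Icc 1 n, r m ^ (j : ℕ) * (B * a m) := by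
        rw [Finset.mul_sum]
        apply Finset.sum_congr rfl
        intro m _
        show (r m * h) ^ (j : ℕ) * (B * a m) = _
        ring
      rw [hrw] at h1
      have hhp : h ^ (j : ℕ) ≠ 0 := pow_ne_zero _ hh
      have h1'' : h ^ (j : ℕ) * (∑ m ∈ Finset.Icc 1 n, r m ^ (j : ℕ) * (B * a m))
          = h ^ (j : ℕ) * (((((j : ℕ) + 1).factorial : ℝ)) * h * φ ((j : ℕ) + 1 + 1)) := by
        rw [h1, pow_succ]
        ring
      exact mul_left_cancel₀ hhp h1''
    have h2' : ∑ m ∈ Finset.Icc 1 n, r m ^ ((j : ℕ) + 1) * q m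
        = ((((j : ℕ) + 1).factorial : ℝ)) * h * φ ((j : ℕ) + 1 + 1) := by
      have hrw : ∑ m ∈ Finset.Icc 1 n, r m ^ ((j : ℕ) + 1) * q m
          = ((((j : ℕ) + 1).factorial : ℝ)) *
            ∑ m ∈ Finset.Icc 1 n, r m ^ ((j : ℕ) + 1) / ((((j : ℕ) + 1).factorial : ℝ)) * q m := by
        rw [Finset.mul_sum]
        apply Finset.sum_congr rfl
        intro m _
        field_simp
      rw [hrw, h2]
      ring
    have hz : ∑ m ∈ Finset.Icc 1 n, r m ^ (j : ℕ) * (B * a m - r m * q m) = 0 := by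
      have e1 : ∀ m, r m ^ (j : ℕ) * (B * a m - r m * q m)
          = r m ^ (j : ℕ) * (B * a m) - r m ^ ((j : ℕ) + 1) * q m := by
        intro m
        rw [pow_succ]
        ring
      simp only [e1, Finset.sum_sub_distrib, h1', h2', sub_self]
    rw [hIcc] at hz
    rw [← hz, ← Fin.sum_univ_eq_sum_range
      (fun k => r (1 + k) ^ (j : ℕ) * (B * a (1 + k) - r (1 + k) * q (1 + k))) n]
  -- Vandermonde argument
  have hvinj : Function.Injective v := by
    intro k k' hkk
    by_contra hne
    exact hrdist _ (hmem k) _ (hmem k') (by omega) hkk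
  have hdet : ((Matrix.vandermonde v).transpose).det ≠ 0 := by
    rw [Matrix.det_transpose, Matrix.det_vandermonde_ne_zero_iff]
    exact hvinj
  have hxzero : x = 0 := by
    have hinj := Matrix.mulVec_injective_iff_isUnit.mpr ((Matrix.isUnit_iff_isUnit_det _).mpr (isUnit_iff_ne_zero.mpr hdet))
    have : Matrix.mulVec (Matrix.vandermonde v).transpose x = Matrix.mulVec (Matrix.vandermonde v).transpose 0 := by
      rw [Matrix.mulVec_zero]
      funext j
      simp only [Matrix.mulVec, dotProduct, Matrix.transpose_apply, Matrix.vandermonde]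
      exact hsum j
    exact hinj this
  have key : ∀ m ∈ Finset.Icc 1 n, B * a m = r m * q m := by
    intro m hm
    simp only [Finset.mem_Icc] at hm
    have hmn : m - 1 < n := by omega
    have := congrFun hxzero ⟨m - 1, hmn⟩
    simp only [hx, Pi.zero_apply] at this
    have hm1 : 1 + (m - 1) = m := by omega
    rw [hm1] at this
    linarith
  refine ⟨key, fun Dv => ?_⟩
  rw [Finset.smul_sum]
  apply Finset.sum_congr rfl
  intro m hm
  rw [smul_smul]
  congr 1
  have h1 := key m hm
  have h2 := hr0 m hm
  field_simp
  linarith [h1]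
end

section
/- Let p ≥ 1 and 1 ≤ k ≤ p be integers, let λ_0, λ_1, …, λ_p be pairwise distinct reals, let h ≠ 0, and set r_j := (λ_j − λ_0)/h for j = 1, …, p (so the r_j are pairwise distinct and nonzero). Let y_0, y_1, …, y_p ∈ ℝ and let P be the unique polynomial of degree at most p with P(λ_j) = y_j for j = 0, 1, …, p. If a ∈ ℝ^p satisfies Σ_{j=1}^p a_j r_j^i / i! = δ_{ik} for every i = 1, …, p, then P^{(k)}(λ_0) = h^{−k} Σ_{j=1}^p a_j (y_j − y_0). That is, the k-th derivative at λ_0 of the Lagrange interpolating polynomial equals the full-order Taylor-difference estimate of the k-th derivative. -/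
/-!
Since `P` has degree at most `p`, its Taylor expansion at `λ₀` is exact:
`y_j - y_0 = ∑_{i=1}^p c_i (r_j h)^i` with `c_i = P^{(i)}(λ₀) / i!` (a Hasse derivative).
Multiplying by `a_j`, summing over `j` and exchanging the sums, the moment conditions on `a`
kill every term except `i = k`, which leaves `h^k k! c_k = h^k P^{(k)}(λ₀)`.
-/

open Polynomial Finset
open scoped Nat

namespace Polynomial

theorem eval_add_eq_sum_range_hasseDeriv {R : Type*} [CommSemiring R] {P : R[X]} {n : ℕ}
    (hP : P.natDegree < n) (x t : R) :
    P.eval (x + t) = ∑ i ∈ range n, (hasseDeriv i P).eval x * t ^ i := by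
  rw [add_comm, ← taylor_eval, eval_eq_sum_range' (by rwa [natDegree_taylor])]
  simp only [taylor_coeff]

theorem eval_add_sub_eval_eq_sum_Icc_hasseDeriv {R : Type*} [CommRing R] {P : R[X]} {p : ℕ}
    (hP : P.natDegree ≤ p) (x t : R) :
    P.eval (x + t) - P.eval x = ∑ i ∈ Icc 1 p, (hasseDeriv i P).eval x * t ^ i := by
  rw [eval_add_eq_sum_range_hasseDeriv (Nat.lt_succ_of_le hP), range_eq_Ico,
    sum_eq_sum_Ico_succ_bot (Nat.succ_pos p), zero_add, Nat.succ_eq_add_one,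
    Ico_add_one_right_eq_Icc]
  simp

theorem eval_iterate_derivative_eq_factorial_mul {R : Type*} [CommSemiring R] (P : R[X])
    (k : ℕ) (x : R) :
    (derivative^[k] P).eval x = k ! * (hasseDeriv k P).eval x := by
  rw [← factorial_smul_hasseDeriv]
  simp [nsmul_eq_mul]

theorem sum_mul_eval_sub_eq_pow_mul_eval_iterate_derivative {K ι : Type*} [Field K] [CharZero K]
    {P : K[X]} {p k : ℕ} (hP : P.natDegree ≤ p) (hk1 : 1 ≤ k) (hkp : k ≤ p)
    (s : Finset ι) (x h : K) (r a : ι → K)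
    (ha : ∀ i ∈ Icc 1 p, ∑ j ∈ s, a j * r j ^ i / i ! = if i = k then 1 else 0) :
    ∑ j ∈ s, a j * (P.eval (x + r j * h) - P.eval x) = h ^ k * (derivative^[k] P).eval x := by
  calc ∑ j ∈ s, a j * (P.eval (x + r j * h) - P.eval x)
      = ∑ j ∈ s, ∑ i ∈ Icc 1 p, i ! * (hasseDeriv i P).eval x * h ^ i * (a j * r j ^ i / i !) := by
        refine sum_congr rfl fun j _ => ?_
        rw [eval_add_sub_eval_eq_sum_Icc_hasseDeriv hP, mul_sum]
        refine sum_congr rfl fun i _ => ?_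
        have : (i ! : K) ≠ 0 := Nat.cast_ne_zero.mpr i.factorial_ne_zero
        field_simp
        ring
    _ = ∑ i ∈ Icc 1 p, i ! * (hasseDeriv i P).eval x * h ^ i * if i = k then 1 else 0 := by
        rw [sum_comm]
        exact sum_congr rfl fun i hi => by rw [← mul_sum, ha i hi]
    _ = h ^ k * (derivative^[k] P).eval x := by
        simp only [mul_ite, mul_one, mul_zero, sum_ite_eq', mem_Icc, hk1, hkp, and_self,
          if_true, eval_iterate_derivative_eq_factorial_mul]
        ring

end Polynomial

theorem stmt_15_general (p k : ℕ) (hk1 : 1 ≤ k) (hkp : k ≤ p)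
    (lam : ℕ → ℝ)
    (h : ℝ) (hh : h ≠ 0)
    (r : ℕ → ℝ) (hr : ∀ j, r j = (lam j - lam 0) / h)
    (y : ℕ → ℝ)
    (P : Polynomial ℝ) (hdeg : P.natDegree ≤ p)
    (hP : ∀ j ≤ p, P.eval (lam j) = y j)
    (a : ℕ → ℝ)
    (ha : ∀ i ∈ Finset.Icc 1 p,
      ∑ j ∈ Finset.Icc 1 p, a j * r j ^ i / (i.factorial : ℝ) =
        if i = k then 1 else 0) :
    ((fun Q => Polynomial.derivative Q)^[k] P).eval (lam 0) =
      (h ^ k)⁻¹ * ∑ j ∈ Finset.Icc 1 p, a j * (y j - y 0) := by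
  have hlam : ∀ j, lam j = lam 0 + r j * h := fun j => by
    rw [hr]
    field_simp
    ring
  have hy : ∑ j ∈ Icc 1 p, a j * (y j - y 0) =
      ∑ j ∈ Icc 1 p, a j * (P.eval (lam 0 + r j * h) - P.eval (lam 0)) :=
    sum_congr rfl fun j hj => by rw [← hlam, hP j (mem_Icc.mp hj).2, hP 0 (Nat.zero_le p)]
  rw [hy, sum_mul_eval_sub_eq_pow_mul_eval_iterate_derivative hdeg hk1 hkp _ _ _ r a ha,
    inv_mul_cancel_left₀ (pow_ne_zero k hh)]

/-- The `k`-th derivative at `λ_0` of the Lagrange interpolating polynomial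
equals the full-order Taylor-difference estimate of the `k`-th derivative. -/
theorem stmt_15 (p k : ℕ) (hp : 1 ≤ p) (hk1 : 1 ≤ k) (hkp : k ≤ p)
    (lam : ℕ → ℝ)
    (hdist : ∀ i ≤ p, ∀ j ≤ p, i ≠ j → lam i ≠ lam j)
    (h : ℝ) (hh : h ≠ 0)
    (r : ℕ → ℝ) (hr : ∀ j, r j = (lam j - lam 0) / h)
    (y : ℕ → ℝ)
    (P : Polynomial ℝ) (hdeg : P.natDegree ≤ p)
    (hP : ∀ j ≤ p, P.eval (lam j) = y j)
    (a : ℕ → ℝ)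
    (ha : ∀ i ∈ Finset.Icc 1 p,
      ∑ j ∈ Finset.Icc 1 p, a j * r j ^ i / (i.factorial : ℝ) =
        if i = k then 1 else 0) :
    ((fun Q => Polynomial.derivative Q)^[k] P).eval (lam 0) =
      (h ^ k)⁻¹ * ∑ j ∈ Finset.Icc 1 p, a j * (y j - y 0) :=
  stmt_15_general p k hk1 hkp lam h hh r hr y P hdeg hP a ha
end
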